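/- arXiv:2107.03597 — 2 statements merged into one kernel-verified Lean document; each statement's English description precedes it below -/
import Mathlib

section
/- If S is an m-separator of two non-adjacent nodes i,j in a MAG G, then S ∩ V_γ(i,j) m-separates i and j in the γ-local graph G_γ(i,j). -/
universe u

/-- A mixed graph with directed, bidirected and undirected edges. -/
structure MixedGraph (V : Type u) where
  dir : V → V → Prop
  bidir : V → V → Prop
  undir : V → V → Prop
  bidir_symm : ∀ a b, bidir a b → bidir b a
  undir_symm : ∀ a b, undir a b → undir b a

namespace MixedGraph

variable {V : Type u} (G : MixedGraph V)

/-- Adjacency in a mixed graph. -/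
def Adj (a b : V) : Prop :=
  G.dir a b ∨ G.dir b a ∨ G.bidir a b ∨ G.undir a b

/-- The edge between `a` and `b` has an arrowhead at `b`. -/
def ArrowInto (a b : V) : Prop := G.dir a b ∨ G.bidir a b

/-- `b` is a descendant of `a` (equivalently `a` is an ancestor of `b`),
allowing trivial directed paths. -/
def Anc (a b : V) : Prop := Relation.ReflTransGen G.dir a b

/-- `b` is a collider on the consecutive triple `(a, b, c)`. -/
def Collider (a b c : V) : Prop := G.ArrowInto a b ∧ G.ArrowInto c b

/-- `π` is a path from `i` to `j`: a list of distinct vertices with consecutive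
vertices adjacent, starting at `i` and ending at `j`. -/
def IsPathBetween (i j : V) (π : List V) : Prop :=
  π.Nodup ∧ π.Chain' G.Adj ∧ π.head? = some i ∧ π.getLast? = some j

/-- A set `S` blocks a path `π`: some non-collider of `π` is in `S`, or some
collider of `π` has no descendant (including itself) in `S`. -/
def Blocks (S : Set V) (π : List V) : Prop :=
  ∃ a b c, [a, b, c] <:+: π ∧
    ((¬ G.Collider a b c ∧ b ∈ S) ∨
     (G.Collider a b c ∧ ∀ d, G.Anc b d → d ∉ S))

/-- `S` m-separates `i` and `j`: every path between them is blocked by `S`. -/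
def MSep (i j : V) (S : Set V) : Prop :=
  ∀ π, G.IsPathBetween i j π → G.Blocks S π

/-- Ancestral graph: no directed cycles, no almost directed cycles, and no
arrowhead at an endpoint of an undirected edge. -/
def IsAncestral : Prop :=
  (∀ a b, G.dir a b → ¬ G.Anc b a) ∧
  (∀ a b, G.bidir a b → ¬ G.Anc a b) ∧
  (∀ a b, G.undir a b → ∀ c, ¬ G.ArrowInto c b)

/-- A maximal ancestral graph (MAG). -/
def IsMAG : Prop :=
  G.IsAncestral ∧
  ∀ i j : V, i ≠ j → ¬ G.Adj i j →
    ∃ S : Set V, S ⊆ {v | v ≠ i ∧ v ≠ j} ∧ G.MSep i j S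

/-- Induced subgraph on a vertex set `A` (keeping the ambient vertex type). -/
def induce (A : Set V) : MixedGraph V where
  dir a b := a ∈ A ∧ b ∈ A ∧ G.dir a b
  bidir a b := a ∈ A ∧ b ∈ A ∧ G.bidir a b
  undir a b := a ∈ A ∧ b ∈ A ∧ G.undir a b
  bidir_symm := fun a b ⟨ha, hb, h⟩ => ⟨hb, ha, G.bidir_symm _ _ h⟩
  undir_symm := fun a b ⟨ha, hb, h⟩ => ⟨hb, ha, G.undir_symm _ _ h⟩

/-- `V_γ(i,j)`: vertices lying on some path between `i` and `j` of length
(number of edges) at most `γ`. -/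
def Vγ (γ : ℕ) (i j : V) : Set V :=
  {v | ∃ π, G.IsPathBetween i j π ∧ π.length ≤ γ + 1 ∧ v ∈ π}

/-- The γ-local graph `G_γ(i,j)`: the subgraph induced by `V_γ(i,j)`. -/
def localGraph (γ : ℕ) (i j : V) : MixedGraph V :=
  G.induce (G.Vγ γ i j)

/-- A γ-local-graph separator of `(i,j)`: a subset of `V_γ(i,j) \ {i,j}`
m-separating `i` and `j` in the γ-local graph. -/
def IsLocalSep (γ : ℕ) (i j : V) (S : Set V) : Prop :=
  S ⊆ G.Vγ γ i j \ {i, j} ∧ (G.localGraph γ i j).MSep i j S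

/-- The (η,γ)-local path property: between any two non-adjacent nodes there
are at most η paths of length at most γ. -/
def LocalPathProp (η γ : ℕ) : Prop :=
  ∀ i j : V, i ≠ j → ¬ G.Adj i j →
    {π : List V | G.IsPathBetween i j π ∧ π.length ≤ γ + 1}.ncard ≤ η

/-- The parents of a vertex. -/
def pa (v : V) : Set V := {u | G.dir u v}

/-- All non-endpoint vertices of `π` are colliders on `π`. -/
def ColliderPathList (π : List V) : Prop :=
  ∀ a b c, [a, b, c] <:+: π → G.Collider a b c

end MixedGraph

/-- The mixed graph of a directed graph. -/
def MixedGraph.ofDir {V : Type u} (E : V → V → Prop) : MixedGraph V where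
  dir := E
  bidir _ _ := False
  undir _ _ := False
  bidir_symm := fun _ _ h => h.elim
  undir_symm := fun _ _ h => h.elim

/-- A directed graph is acyclic. -/
def Acyclic {V : Type u} (E : V → V → Prop) : Prop :=
  ∀ v, ¬ Relation.TransGen E v v

/-!
A path of `G_γ(i,j)` is also a path of `G`, so the m-separator `S` blocks it at some triple
`(a, b, c)`. All three vertices lie in `V_γ(i,j)`, so `b` is a collider in the local graph
exactly when it is one in `G`. A blocking non-collider `b ∈ S` lies in `S ∩ V_γ(i,j)`; for a
blocking collider, every local descendant of `b` is a descendant in `G`, hence avoids `S`.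
-/

namespace MixedGraph

variable {V : Type u} {G : MixedGraph V} {A : Set V}

theorem Adj.of_induce {a b : V} (h : (G.induce A).Adj a b) : a ∈ A ∧ b ∈ A ∧ G.Adj a b := by
  rcases h with h | h | h | h
  exacts [⟨h.1, h.2.1, Or.inl h.2.2⟩, ⟨h.2.1, h.1, Or.inr (Or.inl h.2.2)⟩,
    ⟨h.1, h.2.1, Or.inr (Or.inr (Or.inl h.2.2))⟩, ⟨h.1, h.2.1, Or.inr (Or.inr (Or.inr h.2.2))⟩]

theorem IsPathBetween.of_induce {i j : V} {π : List V}
    (h : (G.induce A).IsPathBetween i j π) : G.IsPathBetween i j π :=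
  ⟨h.1, h.2.1.imp fun _ _ hab => (Adj.of_induce hab).2.2, h.2.2⟩

theorem Anc.of_induce {a b : V} (h : (G.induce A).Anc a b) : G.Anc a b :=
  Relation.ReflTransGen.mono (fun _ _ hxy => hxy.2.2) _ _ h

theorem induce_arrowInto_iff (G : MixedGraph V) {a b : V} (ha : a ∈ A) (hb : b ∈ A) :
    (G.induce A).ArrowInto a b ↔ G.ArrowInto a b :=
  ⟨Or.imp (·.2.2) (·.2.2), Or.imp (⟨ha, hb, ·⟩) (⟨ha, hb, ·⟩)⟩

theorem induce_collider_iff (G : MixedGraph V) {a b c : V} (ha : a ∈ A) (hb : b ∈ A)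
    (hc : c ∈ A) :
    (G.induce A).Collider a b c ↔ G.Collider a b c := by
  rw [Collider, Collider, induce_arrowInto_iff G ha hb, induce_arrowInto_iff G hc hb]

theorem Blocks.induce_inter {S : Set V} {π : List V} (hS : G.Blocks S π)
    (hπ : π.IsChain (G.induce A).Adj) : (G.induce A).Blocks (S ∩ A) π := by
  obtain ⟨a, b, c, hinf, hblock⟩ := hS
  have htriple : [a, b, c].IsChain (G.induce A).Adj := hπ.infix hinf
  obtain ⟨hab, hbc_chain⟩ := List.isChain_cons_cons.mp htriple
  obtain ⟨hbc, -⟩ := List.isChain_cons_cons.mp hbc_chain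
  obtain ⟨ha, hb, -⟩ := Adj.of_induce hab
  obtain ⟨-, hc, -⟩ := Adj.of_induce hbc
  have hcoll := induce_collider_iff G ha hb hc
  refine ⟨a, b, c, hinf, ?_⟩
  rcases hblock with ⟨hnc, hbS⟩ | ⟨hcol, hdesc⟩
  · exact Or.inl ⟨hcoll.not.mpr hnc, hbS, hb⟩
  · exact Or.inr ⟨hcoll.mpr hcol, fun d hd hdS => hdesc d (Anc.of_induce hd) hdS.1⟩

theorem MSep.induce_inter {i j : V} {S : Set V} (hsep : G.MSep i j S) :
    (G.induce A).MSep i j (S ∩ A) := fun π hπ =>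
  (hsep π (IsPathBetween.of_induce hπ)).induce_inter hπ.2.1

end MixedGraph

theorem stmt1_general {V : Type u} (G : MixedGraph V) (γ : ℕ) (i j : V) (S : Set V)
    (hsep : G.MSep i j S) :
    (G.localGraph γ i j).MSep i j (S ∩ G.Vγ γ i j) :=
  hsep.induce_inter

/-- If S m-separates non-adjacent i,j in a MAG G, then S ∩ V_γ(i,j)
m-separates i and j in the γ-local graph. -/
theorem stmt1 {V : Type u} (G : MixedGraph V) (hG : G.IsMAG) (γ : ℕ) (i j : V)
    (hij : i ≠ j) (hadj : ¬ G.Adj i j) (S : Set V) (hiS : i ∉ S) (hjS : j ∉ S)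
    (hsep : G.MSep i j S) :
    (G.localGraph γ i j).MSep i j (S ∩ G.Vγ γ i j) :=
  stmt1_general G γ i j S hsep
end

section
/- Let G be a DAG and i,j two non-adjacent vertices with i not an ancestor of j. Then the set pa(G_γ(i,j), i) of parents of i within the γ-local graph d-separates i and j in G_γ(i,j). -/
universe u

/-! Follow a path out of `i` while its edges point away from `i`: every vertex reached is a
descendant of `i`. Since `j` is not, some edge must eventually point back, producing a collider
that is a descendant of `i`; a parent of `i` among its descendants would close a directed cycle.
If instead the path starts with an edge into `i`, its second vertex is a parent of `i` and,
by acyclicity, not a collider. -/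

open Relation

theorem Acyclic.mono {V : Type*} {E E' : V → V → Prop} (h : Acyclic E)
    (hE : ∀ a b, E' a b → E a b) : Acyclic E' :=
  fun v hv => h v (TransGen.mono hE _ _ hv)

theorem Acyclic.not_rel_of_reflTransGen {V : Type*} {E : V → V → Prop} (h : Acyclic E)
    {a b : V} (hab : ReflTransGen E a b) : ¬ E b a :=
  fun hba => h a (TransGen.tail' hab hba)

namespace MixedGraph

theorem Blocks.cons {V : Type*} {G : MixedGraph V} {S : Set V} {π : List V} (a : V)
    (h : G.Blocks S π) : G.Blocks S (a :: π) := by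
  obtain ⟨x, y, z, ⟨s, t, rfl⟩, hxyz⟩ := h
  exact ⟨x, y, z, ⟨a :: s, t, rfl⟩, hxyz⟩

variable {V : Type*} {E : V → V → Prop}

theorem ofDir_adj {a b : V} : (ofDir E).Adj a b ↔ E a b ∨ E b a := by
  simp [Adj, ofDir]

theorem ofDir_collider {a b c : V} : (ofDir E).Collider a b c ↔ E a b ∧ E c b := by
  simp [Collider, ArrowInto, ofDir]

theorem induce_ofDir (A : Set V) :
    (ofDir E).induce A = ofDir (fun a b => a ∈ A ∧ b ∈ A ∧ E a b) := by
  simp [induce, ofDir]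

theorem ofDir_blocks_pa_of_descendant (hacyc : Acyclic E) {i j a b : V}
    (hanc : ¬ ReflTransGen E i j) (rest : List V) (hia : ReflTransGen E i a) (hab : E a b)
    (hchain : (a :: b :: rest).IsChain (ofDir E).Adj)
    (hlast : (a :: b :: rest).getLast? = some j) :
    (ofDir E).Blocks ((ofDir E).pa i) (a :: b :: rest) := by
  induction rest generalizing a b with
  | nil =>
    obtain rfl : b = j := by simpa using hlast
    exact absurd (hia.tail hab) hanc
  | cons c rest ih =>
    have hib : ReflTransGen E i b := hia.tail hab
    rcases ofDir_adj.mp (List.isChain_cons_cons.mp hchain.tail).1 with hbc | hcb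
    · exact (ih hib hbc hchain.tail (by simpa using hlast)).cons a
    · refine ⟨a, b, c, ⟨[], rest, rfl⟩, Or.inr ⟨ofDir_collider.mpr ⟨hab, hcb⟩, ?_⟩⟩
      intro d hbd hdi
      exact hacyc.not_rel_of_reflTransGen (hib.trans hbd) hdi

theorem ofDir_mSep_pa (hacyc : Acyclic E) {i j : V} (hadj : ¬ (ofDir E).Adj i j)
    (hanc : ¬ (ofDir E).Anc i j) : (ofDir E).MSep i j ((ofDir E).pa i) := by
  rintro π ⟨-, hchain, hhead, hlast⟩
  rcases π with _ | ⟨x, _ | ⟨y, _ | ⟨z, rest⟩⟩⟩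
  · simp at hhead
  · obtain ⟨rfl, rfl⟩ : x = i ∧ x = j := ⟨by simpa using hhead, by simpa using hlast⟩
    exact absurd ReflTransGen.refl hanc
  · obtain ⟨rfl, rfl⟩ : x = i ∧ y = j := ⟨by simpa using hhead, by simpa using hlast⟩
    exact absurd (List.isChain_cons_cons.mp hchain).1 hadj
  · obtain rfl : x = i := by simpa using hhead
    rcases ofDir_adj.mp (List.isChain_cons_cons.mp hchain).1 with hiy | hyi
    · exact ofDir_blocks_pa_of_descendant hacyc hanc (z :: rest) .refl hiy hchain hlast
    · refine ⟨x, y, z, ⟨[], rest, rfl⟩, Or.inl ⟨fun hcol => ?_, hyi⟩⟩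
      exact hacyc.not_rel_of_reflTransGen (.single (ofDir_collider.mp hcol).1) hyi

end MixedGraph

theorem stmt3_general {V : Type u} (E : V → V → Prop) (hacyc : Acyclic E) (γ : ℕ)
    (i j : V) (hadj : ¬ (MixedGraph.ofDir E).Adj i j)
    (hanc : ¬ (MixedGraph.ofDir E).Anc i j) :
    ((MixedGraph.ofDir E).localGraph γ i j).MSep i j
      (((MixedGraph.ofDir E).localGraph γ i j).pa i) := by
  set A := (MixedGraph.ofDir E).Vγ γ i j
  have hsub : ∀ a b, (a ∈ A ∧ b ∈ A ∧ E a b) → E a b := fun _ _ h => h.2.2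
  rw [MixedGraph.localGraph, MixedGraph.induce_ofDir]
  refine MixedGraph.ofDir_mSep_pa (hacyc.mono hsub) (fun h => hadj ?_)
    (fun h => hanc (ReflTransGen.mono hsub _ _ h))
  exact MixedGraph.ofDir_adj.mpr ((MixedGraph.ofDir_adj.mp h).imp (hsub _ _) (hsub _ _))

/-- In a DAG, for non-adjacent i,j with i not an ancestor of j, the
parents of i in the γ-local graph d-separate i and j in the γ-local graph. -/
theorem stmt3 {V : Type u} (E : V → V → Prop) (hacyc : Acyclic E) (γ : ℕ)
    (i j : V) (hij : i ≠ j) (hadj : ¬ (MixedGraph.ofDir E).Adj i j)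
    (hanc : ¬ (MixedGraph.ofDir E).Anc i j) :
    ((MixedGraph.ofDir E).localGraph γ i j).MSep i j
      (((MixedGraph.ofDir E).localGraph γ i j).pa i) :=
  stmt3_general E hacyc γ i j hadj hanc
end
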